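/- arXiv:2605.24506 — 2 statements merged into one kernel-verified Lean document; each statement's English description precedes it below -/
import Mathlib

section
/- (S-procedure, lossless case with one constraint) Let Q₀, Q₁ be real symmetric n×n matrices and suppose there exists x̄ with x̄ᵀQ₁x̄ > 0. Then (for all x: xᵀQ₁x ≥ 0 implies xᵀQ₀x ≤ 0) if and only if there exists λ ≥ 0 such that Q₀ + λQ₁ is negative semidefinite. -/
/-!
If `Q₁ x < 0 < Q₁ y`, the constraint `u ↦ Q₁ (u • x + y)` is a concave quadratic that is positive
at `0`, so it has roots `u₁ < 0 < u₂`; since `Q₀ (uᵢ • x + y) ≤ 0`, eliminating the cross term gives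
`Q₀ x * Q₁ y ≤ Q₀ y * Q₁ x`. Hence every ratio `Q₀ x / (-Q₁ x)` with `Q₁ x < 0` lies below every
ratio `-Q₀ y / Q₁ y` with `Q₁ y > 0`, and any `λ` in between (the infimum of the latter, which the
Slater point makes meaningful) satisfies `Q₀ + λ Q₁ ≤ 0` everywhere.
-/

open Matrix

/-- A matrix `M` is negative semidefinite iff `-M` is positive semidefinite. -/
def Matrix.NegSemidef {m : Type*} [Fintype m] (M : Matrix m m ℝ) : Prop :=
  (-M).PosSemidef

lemma exists_factorization_of_neg_of_pos {a c : ℝ} (b : ℝ) (ha : a < 0) (hc : 0 < c) :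
    ∃ u₁ u₂ : ℝ, u₁ < 0 ∧ 0 < u₂ ∧ ∀ u, a * u ^ 2 + b * u + c = a * (u - u₁) * (u - u₂) := by
  have hdisc : 0 ≤ b ^ 2 - 4 * a * c := by nlinarith [sq_nonneg b]
  set s := √(b ^ 2 - 4 * a * c)
  have hs : s ^ 2 = b ^ 2 - 4 * a * c := Real.sq_sqrt hdisc
  have hs_gt : |b| < s := abs_lt_of_sq_lt_sq (by nlinarith) (Real.sqrt_nonneg _)
  obtain ⟨hbs₁, hbs₂⟩ := abs_lt.mp hs_gt
  refine ⟨(-b + s) / (2 * a), (-b - s) / (2 * a),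
    div_neg_of_pos_of_neg (by linarith) (by linarith),
    div_pos_of_neg_of_neg (by linarith) (by linarith), fun u => ?_⟩
  field_simp [ha.ne]
  linear_combination hs

lemma coeff_mul_le_of_quadratic_nonneg_imp_nonpos {a b c a' b' c' : ℝ} (ha : a < 0) (hc : 0 < c)
    (H : ∀ u, 0 ≤ a * u ^ 2 + b * u + c → a' * u ^ 2 + b' * u + c' ≤ 0) :
    a' * c ≤ c' * a := by
  obtain ⟨u₁, u₂, hu₁, hu₂, hp⟩ := exists_factorization_of_neg_of_pos b ha hc
  have hq₁ := H u₁ (by rw [hp]; simp)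
  have hq₂ := H u₂ (by rw [hp]; simp)
  have hc_eq : c = a * u₁ * u₂ := by simpa using hp 0
  have hc' : c' ≤ a' * (u₁ * u₂) := by
    have : (u₂ - u₁) * (c' - a' * (u₁ * u₂)) ≤ 0 := by
      nlinarith [mul_nonpos_of_nonneg_of_nonpos hu₂.le hq₁,
        mul_nonpos_of_nonneg_of_nonpos (neg_nonneg.mpr hu₁.le) hq₂]
    nlinarith
  rw [hc_eq]
  nlinarith

namespace QuadraticMap

variable {V : Type*} [AddCommGroup V] [Module ℝ V]

lemma apply_smul_add (Q : QuadraticForm ℝ V) (u : ℝ) (x y : V) :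
    Q (u • x + y) = Q x * u ^ 2 + polar Q x y * u + Q y := by
  rw [QuadraticMap.map_add (⇑Q), QuadraticMap.map_smul, polar_smul_left, smul_eq_mul, smul_eq_mul]
  ring

lemma mul_apply_le_of_nonneg_imp_nonpos {Q₀ Q₁ : QuadraticForm ℝ V}
    (h : ∀ x, 0 ≤ Q₁ x → Q₀ x ≤ 0) {x y : V} (hx : Q₁ x < 0) (hy : 0 < Q₁ y) :
    Q₀ x * Q₁ y ≤ Q₀ y * Q₁ x :=
  coeff_mul_le_of_quadratic_nonneg_imp_nonpos hx hy fun u hu => by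
    simpa only [apply_smul_add] using h (u • x + y) (by rwa [apply_smul_add])

lemma exists_nonneg_add_mul_nonpos {Q₀ Q₁ : QuadraticForm ℝ V}
    (h : ∀ x, 0 ≤ Q₁ x → Q₀ x ≤ 0) (hSlater : ∃ x, 0 < Q₁ x) :
    ∃ l : ℝ, 0 ≤ l ∧ ∀ x, Q₀ x + l * Q₁ x ≤ 0 := by
  set T := (fun y => -Q₀ y / Q₁ y) '' {y | 0 < Q₁ y}
  have hT : T.Nonempty := let ⟨x, hx⟩ := hSlater; ⟨_, x, hx, rfl⟩
  have hT_nonneg : ∀ t ∈ T, 0 ≤ t := by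
    rintro _ ⟨y, hy, rfl⟩
    exact div_nonneg (neg_nonneg.mpr (h y hy.le)) hy.le
  refine ⟨sInf T, le_csInf hT hT_nonneg, fun x => ?_⟩
  rcases lt_trichotomy (Q₁ x) 0 with hx | hx | hx
  · have : Q₀ x / -Q₁ x ≤ sInf T := by
      refine le_csInf hT ?_
      rintro _ ⟨y, hy, rfl⟩
      rw [div_le_div_iff₀ (by linarith) hy]
      linarith [mul_apply_le_of_nonneg_imp_nonpos h hx hy]
    rw [div_le_iff₀ (by linarith)] at this
    linarith
  · simpa [hx] using h x hx.ge
  · have : sInf T ≤ -Q₀ x / Q₁ x := csInf_le ⟨0, hT_nonneg⟩ ⟨x, hx, rfl⟩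
    rw [le_div_iff₀ hx] at this
    linarith

theorem s_lemma {Q₀ Q₁ : QuadraticForm ℝ V} (hSlater : ∃ x, 0 < Q₁ x) :
    (∀ x, 0 ≤ Q₁ x → Q₀ x ≤ 0) ↔ ∃ l : ℝ, 0 ≤ l ∧ ∀ x, Q₀ x + l * Q₁ x ≤ 0 := by
  refine ⟨fun h => exists_nonneg_add_mul_nonpos h hSlater, ?_⟩
  rintro ⟨l, hl, hQ⟩ x hx
  nlinarith [hQ x, mul_nonneg hl hx]

end QuadraticMap

namespace Matrix

lemma toQuadraticForm'_apply {m : Type*} [Fintype m] [DecidableEq m] (M : Matrix m m ℝ)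
    (x : m → ℝ) : M.toQuadraticForm' x = x ⬝ᵥ M *ᵥ x := by
  simp [toQuadraticForm', toLinearMap₂'_apply']

lemma negSemidef_iff {m : Type*} [Fintype m] {M : Matrix m m ℝ} (hM : M.IsHermitian) :
    M.NegSemidef ↔ ∀ x, x ⬝ᵥ M *ᵥ x ≤ 0 := by
  simp only [NegSemidef, posSemidef_iff_dotProduct_mulVec, hM.neg, true_and, star_trivial,
    neg_mulVec, dotProduct_neg, neg_nonneg]

end Matrix

/-- Lossless S-procedure with one quadratic constraint: for symmetric `Q₀, Q₁`, if there
exists `x̄` with `x̄ᵀQ₁x̄ > 0` (Slater condition), then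
`(∀ x, xᵀQ₁x ≥ 0 → xᵀQ₀x ≤ 0)` iff there exists `λ ≥ 0` with `Q₀ + λQ₁` negative
semidefinite. -/
theorem stmt_8 {n : ℕ} (Q₀ Q₁ : Matrix (Fin n) (Fin n) ℝ)
    (hQ₀ : Q₀.IsHermitian) (hQ₁ : Q₁.IsHermitian)
    (hSlater : ∃ x : Fin n → ℝ, 0 < x ⬝ᵥ Q₁.mulVec x) :
    (∀ x : Fin n → ℝ, 0 ≤ x ⬝ᵥ Q₁.mulVec x → x ⬝ᵥ Q₀.mulVec x ≤ 0) ↔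
      ∃ l : ℝ, 0 ≤ l ∧ (Q₀ + l • Q₁).NegSemidef := by
  have hQ (l : ℝ) : (Q₀ + l • Q₁).IsHermitian := hQ₀.add (hQ₁.smul (IsSelfAdjoint.all l))
  have := QuadraticMap.s_lemma (Q₀ := Q₀.toQuadraticForm') (Q₁ := Q₁.toQuadraticForm')
    (by simpa only [toQuadraticForm'_apply] using hSlater)
  simpa only [toQuadraticForm'_apply, negSemidef_iff (hQ _), add_mulVec, smul_mulVec,
    dotProduct_add, dotProduct_smul, smul_eq_mul] using this
end

section
/- Let f : ℝⁿ → ℝⁿ be continuously differentiable and suppose there exist a symmetric positive definite matrix P and β > 0 such that Df(x)ᵀP + P Df(x) ⪯ -2βP for all x. Then for any two solutions x(t), y(t) of ẋ = f(x), the weighted distance satisfies (x(t)-y(t))ᵀP(x(t)-y(t)) ≤ e^{-2βt} (x(0)-y(0))ᵀP(x(0)-y(0)). -/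
/-! Along the segment from `b` to `a`, the hypothesis on `Df` bounds the derivative of
`s ↦ (a - b)ᵀ P f(b + s (a - b))`, which gives the one-sided Lipschitz bound
`(a - b)ᵀ P (f a - f b) ≤ -β (a - b)ᵀ P (a - b)`. Since `P` is symmetric, the derivative of
`V(t) = (x - y)ᵀ P (x - y)` is `2 (x - y)ᵀ P (f x - f y) ≤ -2β V(t)`, and Grönwall's
inequality gives `V(t) ≤ e^{-2βt} V(0)`. -/

open Matrix

section Derivatives

variable {𝕜 ι κ : Type*} [NontriviallyNormedField 𝕜] [Fintype ι]
  {t : 𝕜} {u : 𝕜 → ι → 𝕜} {u' : ι → 𝕜}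

theorem HasDerivAt.dotProduct {w : 𝕜 → ι → 𝕜} {w' : ι → 𝕜} (hu : HasDerivAt u u' t)
    (hw : HasDerivAt w w' t) :
    HasDerivAt (fun s => u s ⬝ᵥ w s) (u' ⬝ᵥ w t + u t ⬝ᵥ w') t := by
  unfold _root_.dotProduct
  rw [← Finset.sum_add_distrib]
  exact HasDerivAt.fun_sum fun i _ => (hasDerivAt_pi.1 hu i).mul (hasDerivAt_pi.1 hw i)

theorem HasDerivAt.mulVec (A : Matrix κ ι 𝕜) (hu : HasDerivAt u u' t) :
    HasDerivAt (fun s => A *ᵥ u s) (A *ᵥ u') t :=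
  hasDerivAt_pi.2 fun i => (hasDerivAt_const t (A i)).dotProduct hu |>.congr_deriv (by simp; rfl)

theorem HasDerivAt.dotProduct_mulVec_self {A : Matrix ι ι 𝕜} (hA : A.IsSymm)
    (hu : HasDerivAt u u' t) :
    HasDerivAt (fun s => u s ⬝ᵥ A *ᵥ u s) (2 * (u t ⬝ᵥ A *ᵥ u')) t := by
  refine hu.dotProduct (hu.mulVec A) |>.congr_deriv ?_
  rw [dotProduct_mulVec, ← mulVec_transpose, hA.eq, dotProduct_comm, two_mul]

end Derivatives

theorem dotProduct_mulVec_sub_le_of_fderiv_le {ι : Type*} [Fintype ι]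
    {f : (ι → ℝ) → ι → ℝ} (hf : Differentiable ℝ f) (P : Matrix ι ι ℝ) {c : ℝ}
    (h : ∀ x v, v ⬝ᵥ P *ᵥ fderiv ℝ f x v ≤ c * (v ⬝ᵥ P *ᵥ v)) (a b : ι → ℝ) :
    (a - b) ⬝ᵥ P *ᵥ (f a - f b) ≤ c * ((a - b) ⬝ᵥ P *ᵥ (a - b)) := by
  set v := a - b
  set g : ℝ → ℝ := fun s => v ⬝ᵥ P *ᵥ f (b + s • v)
  have hg : ∀ s, HasDerivAt g (v ⬝ᵥ P *ᵥ fderiv ℝ f (b + s • v) v) s := by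
    intro s
    have hline : HasDerivAt (fun s : ℝ => b + s • v) v s := by
      simpa using ((hasDerivAt_id s).smul_const v).const_add b
    have hfline := (hf (b + s • v)).hasFDerivAt.comp_hasDerivAt s hline
    exact (hasDerivAt_const s v).dotProduct (hfline.mulVec P) |>.congr_deriv (by simp)
  have := image_sub_le_mul_sub_of_deriv_le (fun s => (hg s).differentiableAt)
    (fun s => (hg s).deriv ▸ h _ v) zero_le_one
  simpa [g, v, mulVec_sub] using this

theorem le_mul_exp_of_hasDerivAt_le_mul {V V' : ℝ → ℝ} {K a t : ℝ}
    (hV : ∀ s, HasDerivAt V (V' s) s) (hle : ∀ s, V' s ≤ K * V s) (hat : a ≤ t) :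
    V t ≤ V a * Real.exp (K * (t - a)) := by
  rw [← gronwallBound_ε0]
  refine le_gronwallBound_of_liminf_deriv_right_le (f' := V') (b := t) (ε := 0) ?_ ?_ le_rfl ?_
    t ⟨hat, le_rfl⟩
  · exact fun s _ => (hV s).continuousAt.continuousWithinAt
  · exact fun s _ r hr => (hV s).hasDerivWithinAt.liminf_right_slope_le hr
  · exact fun s _ => by simpa using hle s

theorem stmt_16_general {n : ℕ} (f : (Fin n → ℝ) → Fin n → ℝ) (hf : ContDiff ℝ 1 f)
    (P : Matrix (Fin n) (Fin n) ℝ) (hP : P.PosDef) (β : ℝ)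
    (hcontr : ∀ x v : Fin n → ℝ,
      2 * (v ⬝ᵥ P.mulVec (fderiv ℝ f x v)) ≤ -(2 * β) * (v ⬝ᵥ P.mulVec v))
    (x y : ℝ → Fin n → ℝ)
    (hx : ∀ t : ℝ, HasDerivAt x (f (x t)) t)
    (hy : ∀ t : ℝ, HasDerivAt y (f (y t)) t) :
    ∀ t : ℝ, 0 ≤ t →
      (x t - y t) ⬝ᵥ P.mulVec (x t - y t) ≤
        Real.exp (-(2 * β) * t) * ((x 0 - y 0) ⬝ᵥ P.mulVec (x 0 - y 0)) := by
  intro t ht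
  have hPsymm : P.IsSymm := isHermitian_iff_isSymm.1 hP.isHermitian
  have hV : ∀ s, HasDerivAt (fun s => (x s - y s) ⬝ᵥ P *ᵥ (x s - y s))
      (2 * ((x s - y s) ⬝ᵥ P *ᵥ (f (x s) - f (y s)))) s :=
    fun s => ((hx s).sub (hy s)).dotProduct_mulVec_self hPsymm
  have hlip : ∀ a b, (a - b) ⬝ᵥ P *ᵥ (f a - f b) ≤ -β * ((a - b) ⬝ᵥ P *ᵥ (a - b)) :=
    dotProduct_mulVec_sub_le_of_fderiv_le (hf.differentiable one_ne_zero) P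
      fun x v => by linarith [hcontr x v]
  have := le_mul_exp_of_hasDerivAt_le_mul (K := -(2 * β)) hV
    (fun s => by linarith [hlip (x s) (y s)]) ht
  simpa [mul_comm] using this

/-- Contraction analysis with a constant metric: if `f` is `C¹` and its Jacobian satisfies
`Df(x)ᵀP + P Df(x) ⪯ -2βP` for all `x` (stated equivalently via quadratic forms:
`2 vᵀ P (Df(x)v) ≤ -2β vᵀPv` for all `x, v`), for some symmetric positive definite `P`
and `β > 0`, then any two solutions of `ẋ = f(x)` satisfy
`(x(t)-y(t))ᵀP(x(t)-y(t)) ≤ e^{-2βt}(x(0)-y(0))ᵀP(x(0)-y(0))` for `t ≥ 0`. -/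
theorem stmt_16 {n : ℕ} (f : (Fin n → ℝ) → Fin n → ℝ) (hf : ContDiff ℝ 1 f)
    (P : Matrix (Fin n) (Fin n) ℝ) (hP : P.PosDef) (β : ℝ) (hβ : 0 < β)
    (hcontr : ∀ x v : Fin n → ℝ,
      2 * (v ⬝ᵥ P.mulVec (fderiv ℝ f x v)) ≤ -(2 * β) * (v ⬝ᵥ P.mulVec v))
    (x y : ℝ → Fin n → ℝ)
    (hx : ∀ t : ℝ, HasDerivAt x (f (x t)) t)
    (hy : ∀ t : ℝ, HasDerivAt y (f (y t)) t) :
    ∀ t : ℝ, 0 ≤ t →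
      (x t - y t) ⬝ᵥ P.mulVec (x t - y t) ≤
        Real.exp (-(2 * β) * t) * ((x 0 - y 0) ⬝ᵥ P.mulVec (x 0 - y 0)) :=
  stmt_16_general f hf P hP β hcontr x y hx hy
end
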